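/- arXiv:1607.04658 — 6 statements merged into one kernel-verified Lean document; each statement's English description precedes it below -/
import Mathlib

section
/- For integers y, λ > 0 and prime p, the sum v_p(y) + v_p(y+1) + ... + v_p(y+λ-1) is at most v_p((λ-1)!) + floor(log_p(y+λ)) + min(v_p(y), v_p(λ)). -/
/-!
Write the product `y (y+1) ⋯ (y+λ-1)` as `y.ascFactorial λ` and factor it in two ways through
binomial coefficients:
`y · (λ-1)! · C(y+λ-1, λ-1)` and `λ · (λ-1)! · C(y+λ-1, λ)`.
The `p`-adic valuation of a binomial coefficient `C(n, k)` is at most `⌊log_p n⌋` (Kummer), so each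
factorization bounds the sum of valuations, with `v_p(y)` and `v_p(λ)` respectively.
-/

open Finset Nat

namespace Nat

theorem ascFactorial_succ_eq_mul_factorial_mul_choose (y m : ℕ) :
    y.ascFactorial (m + 1) = y * (m ! * (y + m).choose m) := by
  rw [← ascFactorial_eq_factorial_mul_choose, ascFactorial_succ, ← succ_ascFactorial]

variable {p : ℕ} [hp : Fact p.Prime]

theorem padicValNat_ascFactorial {y : ℕ} (hy : y ≠ 0) (k : ℕ) :
    padicValNat p (y.ascFactorial k) = ∑ i ∈ range k, padicValNat p (y + i) := by
  simp_rw [← factorization_def _ hp.out, ascFactorial_eq_prod_range,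
    factorization_prod fun i _ => (show y + i ≠ 0 by omega), Finsupp.finsetSum_apply]

theorem padicValNat_choose_le_log (n k : ℕ) : padicValNat p (n.choose k) ≤ log p n := by
  rw [← factorization_def _ hp.out]
  exact factorization_choose_le_log

theorem padicValNat_ascFactorial_succ_le_left {y : ℕ} (hy : y ≠ 0) (m : ℕ) :
    padicValNat p (y.ascFactorial (m + 1)) ≤ padicValNat p y + padicValNat p m ! + log p (y + m) := by
  have hchoose : (y + m).choose m ≠ 0 := (choose_pos (by omega)).ne'
  rw [ascFactorial_succ_eq_mul_factorial_mul_choose,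
    padicValNat.mul hy (mul_ne_zero (factorial_ne_zero m) hchoose),
    padicValNat.mul (factorial_ne_zero m) hchoose, ← add_assoc]
  gcongr
  exact padicValNat_choose_le_log _ _

theorem padicValNat_ascFactorial_succ_le_right {y : ℕ} (hy : y ≠ 0) (m : ℕ) :
    padicValNat p (y.ascFactorial (m + 1)) ≤
      padicValNat p (m + 1) + padicValNat p m ! + log p (y + m) := by
  have hchoose : (y + m).choose (m + 1) ≠ 0 := (choose_pos (by omega)).ne'
  rw [ascFactorial_eq_factorial_mul_choose', show y + (m + 1) - 1 = y + m by omega,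
    padicValNat.mul (factorial_ne_zero _) hchoose, factorial_succ,
    padicValNat.mul m.succ_ne_zero (factorial_ne_zero m)]
  gcongr
  exact padicValNat_choose_le_log _ _

end Nat

/-- For integers `y, λ > 0` and prime `p`,
`v_p(y) + ⋯ + v_p(y+λ-1) ≤ v_p((λ-1)!) + ⌊log_p(y+λ)⌋ + min(v_p(y), v_p(λ))`.
Here `Nat.log p` is the floor of the base-`p` logarithm. -/
theorem stmt_1 (p y lam : ℕ) (hp : p.Prime) (hy : 0 < y) (hlam : 0 < lam) :
    ∑ i ∈ Finset.range lam, padicValNat p (y + i) ≤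
      padicValNat p (Nat.factorial (lam - 1)) + Nat.log p (y + lam)
        + min (padicValNat p y) (padicValNat p lam) := by
  have : Fact p.Prime := ⟨hp⟩
  obtain ⟨m, rfl⟩ := Nat.exists_eq_add_one_of_ne_zero hlam.ne'
  rw [← Nat.padicValNat_ascFactorial hy.ne', Nat.add_sub_cancel]
  have hleft := Nat.padicValNat_ascFactorial_succ_le_left (p := p) hy.ne' m
  have hright := Nat.padicValNat_ascFactorial_succ_le_right (p := p) hy.ne' m
  have hlog : Nat.log p (y + m) ≤ Nat.log p (y + (m + 1)) := Nat.log_mono_right (by omega)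
  omega
end

section
/- Consider a set of points P = {(i, y_i) : i ≥ 0} with y_i ∈ ℝ_{>0}, and suppose the sequence of first differences Δ_i = y_i - y_{i-1} (i ≥ 1) is a union of C arithmetic progressions with common difference δ, in the sense that Δ_{i+C} = Δ_i + δ for all i ≥ 1. If x ≥ C is the index of a break point of the lower convex hull (Newton polygon) of P, then x - C is also the index of a break point. -/
/-!
Summing the relation `Δ_{i+C} = Δ_i + δ` shows that the shifted sequence `i ↦ y (i + C)` is
`y` plus the affine function `i ↦ (y C - y 0) + i δ`. Adding an affine function does not change
which points of `(i, y i)` lie strictly below the chords through their neighbours, and a break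
point `x` of `y` is, after translating indices by `C`, a break point `x - C` of the shifted
sequence.
-/

variable {𝕜 : Type*} [CommRing 𝕜] [PartialOrder 𝕜]

def IsBreakPoint (y : ℕ → 𝕜) (x : ℕ) : Prop :=
  ∀ i j : ℕ, i < x → x < j → (y x - y i) * ((j : 𝕜) - x) < (y j - y x) * ((x : 𝕜) - i)

theorem IsBreakPoint.comp_add_right {y : ℕ → 𝕜} {x : ℕ} (C : ℕ) (h : IsBreakPoint y (x + C)) :
    IsBreakPoint (fun i => y (i + C)) x := by
  intro i j hi hj
  have := h (i + C) (j + C) (by omega) (by omega)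
  push_cast at this
  simpa only [add_sub_add_right_eq_sub] using this

theorem isBreakPoint_add_affine_iff [IsOrderedAddMonoid 𝕜] {y : ℕ → 𝕜} {x : ℕ} (a δ : 𝕜) :
    IsBreakPoint (fun i => y i + (a + i * δ)) x ↔ IsBreakPoint y x := by
  refine forall₂_congr fun i j => imp_congr_right fun _ => imp_congr_right fun _ => ?_
  rw [← sub_neg, ← sub_neg (a := (y x - y i) * _)]
  ring_nf

theorem comp_add_eq_add_affine {R : Type*} [CommRing R] {y : ℕ → R} {C : ℕ} {δ : R}
    (hΔ : ∀ i : ℕ, 1 ≤ i → y (i + C) - y (i + C - 1) = (y i - y (i - 1)) + δ) (i : ℕ) :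
    y (i + C) = y i + ((y C - y 0) + i * δ) := by
  induction i with
  | zero => simp
  | succ i ih =>
    have step := hΔ (i + 1) (by omega)
    rw [show i + 1 + C - 1 = i + C by omega, Nat.add_sub_cancel, ih] at step
    push_cast
    linear_combination step

theorem stmt_7_general (y : ℕ → ℝ) (C : ℕ) (δ : ℝ)
    (hΔ : ∀ i : ℕ, 1 ≤ i → y (i + C) - y (i + C - 1) = (y i - y (i - 1)) + δ)
    (x : ℕ) (hx : C ≤ x)
    (hbreak : ∀ i j : ℕ, i < x → x < j →
      (y x - y i) * ((j : ℝ) - (x : ℝ)) < (y j - y x) * ((x : ℝ) - (i : ℝ))) :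
    ∀ i j : ℕ, i < x - C → x - C < j →
      (y (x - C) - y i) * ((j : ℝ) - ((x - C : ℕ) : ℝ))
        < (y j - y (x - C)) * (((x - C : ℕ) : ℝ) - (i : ℝ)) := by
  have hshift : IsBreakPoint (fun i => y (i + C)) (x - C) :=
    IsBreakPoint.comp_add_right C (by rwa [Nat.sub_add_cancel hx])
  simp only [comp_add_eq_add_affine hΔ] at hshift
  exact (isBreakPoint_add_affine_iff _ _).1 hshift

/-- If the first differences `Δ_i = y_i - y_{i-1}` of points `(i, y_i)` (with `y_i > 0`)
form a union of `C` arithmetic progressions with common difference `δ`, in the sense that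
`Δ_{i+C} = Δ_i + δ` for all `i ≥ 1`, then whenever `x ≥ C` is the index of a break point
(vertex) of the lower convex hull (Newton polygon) of the points, so is `x - C`.  Here
"`x` is a break point index" means: for all `i < x < j`, the point `(x, y_x)` lies
strictly below the segment from `(i, y_i)` to `(j, y_j)`, expressed by the cross-multiplied
slope inequality. -/
theorem stmt_7 (y : ℕ → ℝ) (hy : ∀ i, 0 < y i) (C : ℕ) (hC : 0 < C) (δ : ℝ)
    (hΔ : ∀ i : ℕ, 1 ≤ i → y (i + C) - y (i + C - 1) = (y i - y (i - 1)) + δ)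
    (x : ℕ) (hx : C ≤ x)
    (hbreak : ∀ i j : ℕ, i < x → x < j →
      (y x - y i) * ((j : ℝ) - (x : ℝ)) < (y j - y x) * ((x : ℝ) - (i : ℝ))) :
    ∀ i j : ℕ, i < x - C → x - C < j →
      (y (x - C) - y i) * ((j : ℝ) - ((x - C : ℕ) : ℝ))
        < (y j - y (x - C)) * (((x - C : ℕ) : ℝ) - (i : ℝ)) :=
  stmt_7_general y C δ hΔ x hx hbreak
end

section
/- For all even integers k ≤ 0 and all i ≥ 1, the quantity v_2(2^{2i} · (−k+12i+2)!·(−k+6i)! / ((−k+8i+2)!·(−k+8i−2)!·(−k+12i))) equals the sum over even j in {8i+4,...,12i−2} ∪ {12i+2} of v_2(k−j) minus the sum over even j in {6i+2,...,8i−2} of v_2(k−j), plus 2i. -/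
/-!
Write `k = -n` with `n` even. Consecutive factorials telescope: `v₂((n+b)!) - v₂((n+a)!)` is the
sum of `v₂(m)` over `n+a < m ≤ n+b`, and only even `m = n+j` contribute, with
`v₂(n+j) = v₂(k-j)`. The numerator/denominator pairs `(n+12i+2)!/(n+8i+2)!` and
`(n+8i-2)!/(n+6i)!` produce the two sums, the extra term `j = 12i` of the first one cancels
against the factor `n+12i`, and `2^{2i}` contributes `2i`.
-/

open Finset
open scoped Nat

theorem padicValNat_factorial_sub_factorial (p : ℕ) [Fact p.Prime] {a b : ℕ} (h : a ≤ b) :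
    (padicValNat p b ! : ℤ) - padicValNat p a ! = ∑ m ∈ Ioc a b, (padicValNat p m : ℤ) := by
  induction b, h using Nat.le_induction with
  | base => simp
  | succ b hab ih =>
    rw [sum_Ioc_succ_top hab, ← ih, Nat.factorial_succ,
      padicValNat.mul b.succ_ne_zero b.factorial_ne_zero]
    push_cast
    ring

theorem sum_Ioc_add_padicValNat_two {n : ℕ} (hn : Even n) (a b : ℕ) :
    ∑ m ∈ Ioc (n + a) (n + b), (padicValNat 2 m : ℤ)
      = ∑ j ∈ (Ioc a b).filter Even, (padicValNat 2 (n + j) : ℤ) := by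
  rw [sum_filter_of_ne, ← map_add_left_Ioc, sum_map]
  · rfl
  intro j _ hj
  contrapose! hj
  have : ¬ 2 ∣ n + j := by
    rw [← even_iff_two_dvd, Nat.even_add]
    tauto
  simp [padicValNat.eq_zero_of_not_dvd this]

theorem padicValNat_two_factorial_add_sub {n : ℕ} (hn : Even n) {a b : ℕ} (h : a ≤ b) :
    (padicValNat 2 (n + b)! : ℤ) - padicValNat 2 (n + a)!
      = ∑ j ∈ (Ioc a b).filter Even, (padicValNat 2 (n + j) : ℤ) := by
  rw [padicValNat_factorial_sub_factorial 2 (by omega), sum_Ioc_add_padicValNat_two hn]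

theorem padicValRat_mul_mul_div_mul_mul (p : ℕ) [Fact p.Prime] {a b c d e f : ℕ}
    (ha : a ≠ 0) (hb : b ≠ 0) (hc : c ≠ 0) (hd : d ≠ 0) (he : e ≠ 0) (hf : f ≠ 0) :
    padicValRat p ((a * b * c : ℚ) / (d * e * f))
      = (padicValNat p a + padicValNat p b + padicValNat p c
          - padicValNat p d - padicValNat p e - padicValNat p f : ℤ) := by
  have cast_ne {x : ℕ} (hx : x ≠ 0) : (x : ℚ) ≠ 0 := Nat.cast_ne_zero.2 hx
  rw [padicValRat.div (by positivity) (by positivity),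
    padicValRat.mul (by positivity) (cast_ne hc), padicValRat.mul (cast_ne ha) (cast_ne hb),
    padicValRat.mul (by positivity) (cast_ne hf), padicValRat.mul (cast_ne hd) (cast_ne he)]
  simp only [padicValRat.of_nat]
  ring

theorem padicValRat_two_factorial_ratio {n : ℕ} (hn : Even n) {i : ℕ} (hi : 1 ≤ i) :
    padicValRat 2 (((2 ^ (2 * i) : ℕ) * (n + (12 * i + 2))! * (n + 6 * i)! : ℚ)
        / ((n + (8 * i + 2))! * (n + (8 * i - 2))! * (n + 12 * i : ℕ)))
      = (∑ j ∈ insert (12 * i + 2) ((Icc (8 * i + 4) (12 * i - 2)).filter (fun j => Even j)),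
          (padicValNat 2 (n + j) : ℤ))
        - (∑ j ∈ (Icc (6 * i + 2) (8 * i - 2)).filter (fun j => Even j),
          (padicValNat 2 (n + j) : ℤ))
        + 2 * i := by
  have hupper : (Ioc (8 * i + 2) (12 * i + 2)).filter Even = insert (12 * i)
      (insert (12 * i + 2) ((Icc (8 * i + 4) (12 * i - 2)).filter (fun j => Even j))) := by
    ext x
    simp only [mem_filter, mem_Ioc, mem_Icc, mem_insert, Nat.even_iff]
    omega
  have hlower : (Ioc (6 * i) (8 * i - 2)).filter Even
      = (Icc (6 * i + 2) (8 * i - 2)).filter (fun j => Even j) := by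
    ext x
    simp only [mem_filter, mem_Ioc, mem_Icc, Nat.even_iff]
    omega
  have h12i : 12 * i ∉
      insert (12 * i + 2) ((Icc (8 * i + 4) (12 * i - 2)).filter (fun j => Even j)) := by
    simp only [mem_insert, mem_filter, mem_Icc]
    omega
  have hupper_sum := padicValNat_two_factorial_add_sub hn (by omega : 8 * i + 2 ≤ 12 * i + 2)
  have hlower_sum := padicValNat_two_factorial_add_sub hn (by omega : 6 * i ≤ 8 * i - 2)
  rw [hupper, sum_insert h12i] at hupper_sum
  rw [hlower] at hlower_sum
  rw [padicValRat_mul_mul_div_mul_mul 2 (by positivity) (Nat.factorial_ne_zero _)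
    (Nat.factorial_ne_zero _) (Nat.factorial_ne_zero _) (Nat.factorial_ne_zero _) (by omega),
    padicValNat.prime_pow]
  omega

/-- For all even integers `k ≤ 0` and all `i ≥ 1`,
`v₂(2^{2i}·(-k+12i+2)!·(-k+6i)! / ((-k+8i+2)!·(-k+8i-2)!·(-k+12i)))`
equals `Σ_{even j ∈ [8i+4,12i-2] ∪ {12i+2}} v₂(k-j) - Σ_{even j ∈ [6i+2,8i-2]} v₂(k-j) + 2i`. -/
theorem stmt_12 (i : ℕ) (hi : 1 ≤ i) (k : ℤ) (hk : k ≤ 0) (hke : Even k) :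
    padicValRat 2
        (((2 : ℚ) ^ (2 * i)
            * ((-k + 12 * (i : ℤ) + 2).toNat.factorial : ℚ)
            * ((-k + 6 * (i : ℤ)).toNat.factorial : ℚ))
          / ((((-k + 8 * (i : ℤ) + 2).toNat.factorial : ℚ)
              * ((-k + 8 * (i : ℤ) - 2).toNat.factorial : ℚ))
            * ((-k + 12 * (i : ℤ) : ℤ) : ℚ)))
      = (∑ j ∈ insert (12 * i + 2)
            ((Finset.Icc (8 * i + 4) (12 * i - 2)).filter (fun j => Even j)),
          (padicValInt 2 (k - (j : ℤ)) : ℤ))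
        - (∑ j ∈ (Finset.Icc (6 * i + 2) (8 * i - 2)).filter (fun j => Even j),
          (padicValInt 2 (k - (j : ℤ)) : ℤ))
        + 2 * (i : ℤ) := by
  obtain ⟨n, rfl⟩ : ∃ n : ℕ, k = -n := ⟨(-k).toNat, by omega⟩
  have hv (j : ℕ) : (padicValInt 2 (-(n : ℤ) - j) : ℤ) = padicValNat 2 (n + j) := by
    rw [padicValInt]
    congr 2
    omega
  rw [show (-(-(n : ℤ)) + 12 * i + 2).toNat = n + (12 * i + 2) by omega,
    show (-(-(n : ℤ)) + 6 * i).toNat = n + 6 * i by omega,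
    show (-(-(n : ℤ)) + 8 * i + 2).toNat = n + (8 * i + 2) by omega,
    show (-(-(n : ℤ)) + 8 * i - 2).toNat = n + (8 * i - 2) by omega]
  simp only [hv]
  convert padicValRat_two_factorial_ratio (by simpa using hke) hi using 3 <;> push_cast <;> ring
end

section
/- For p = 5 and all integers i ≥ 1 (taking k = 0): v_5(5^{floor(8i/5)} · (3i−1)! · (floor(3i/5))! / (i!·(i−1)!)) = i + v_5((3i)!² / (i)!²). -/
/-- For `p = 5` and all `i ≥ 1`:
`v₅(5^{⌊8i/5⌋}·(3i-1)!·⌊3i/5⌋! / (i!·(i-1)!)) = i + v₅((3i)!²/(i!)²)`. -/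
theorem stmt_13 (i : ℕ) (hi : 1 ≤ i) :
    padicValRat 5
        (((5 : ℚ) ^ (8 * i / 5)
            * ((3 * i - 1).factorial : ℚ) * (((3 * i / 5).factorial : ℚ)))
          / (((i.factorial : ℚ)) * (((i - 1).factorial : ℚ))))
      = (i : ℤ) + padicValRat 5 ((((3 * i).factorial : ℚ)) ^ 2 / ((i.factorial : ℚ)) ^ 2) := by
  haveI hp : Fact (Nat.Prime 5) := ⟨by norm_num⟩
  have h5 : (5 : ℚ) ≠ 0 := by norm_num
  have h5p : (5 : ℚ) ^ (8 * i / 5) ≠ 0 := pow_ne_zero _ h5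
  have hf1 : ((3 * i - 1).factorial : ℚ) ≠ 0 := Nat.cast_ne_zero.2 (Nat.factorial_ne_zero _)
  have hf2 : (((3 * i / 5).factorial : ℚ)) ≠ 0 := Nat.cast_ne_zero.2 (Nat.factorial_ne_zero _)
  have hf3 : ((i.factorial : ℚ)) ≠ 0 := Nat.cast_ne_zero.2 (Nat.factorial_ne_zero _)
  have hf4 : (((i - 1).factorial : ℚ)) ≠ 0 := Nat.cast_ne_zero.2 (Nat.factorial_ne_zero _)
  have hf5 : (((3 * i).factorial : ℚ)) ≠ 0 := Nat.cast_ne_zero.2 (Nat.factorial_ne_zero _)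
  have hv5 : padicValRat 5 (5:ℚ) = 1 := by
    simpa using padicValRat.self (p := 5) (by norm_num)
  rw [padicValRat.div (mul_ne_zero (mul_ne_zero h5p hf1) hf2) (mul_ne_zero hf3 hf4),
    padicValRat.mul (mul_ne_zero h5p hf1) hf2, padicValRat.mul h5p hf1,
    padicValRat.mul hf3 hf4,
    padicValRat.div (pow_ne_zero 2 hf5) (pow_ne_zero 2 hf3),
    padicValRat.pow (((3 * i).factorial : ℚ)), padicValRat.pow ((i.factorial : ℚ)),
    padicValRat.pow (5 : ℚ), hv5,
    padicValRat.of_nat, padicValRat.of_nat, padicValRat.of_nat, padicValRat.of_nat,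
    padicValRat.of_nat]
  -- arithmetic facts
  have e1 : padicValNat 5 ((3 * i).factorial)
      = padicValNat 5 (3 * i) + padicValNat 5 ((3 * i - 1).factorial) := by
    rw [← Nat.mul_factorial_pred (by omega : 3 * i ≠ 0),
      padicValNat.mul (by omega) (Nat.factorial_ne_zero _)]
  have e2 : padicValNat 5 (i.factorial)
      = padicValNat 5 i + padicValNat 5 ((i - 1).factorial) := by
    rw [← Nat.mul_factorial_pred (by omega : i ≠ 0),
      padicValNat.mul (by omega) (Nat.factorial_ne_zero _)]
  have e3 : padicValNat 5 ((3 * i).factorial)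
      = padicValNat 5 ((3 * i / 5).factorial) + 3 * i / 5 := by
    rw [← padicValNat_mul_div_factorial (p := 5) (3 * i), padicValNat_factorial_mul]
  have e4 : padicValNat 5 (3 * i) = padicValNat 5 i := by
    rw [padicValNat.mul (by norm_num) (by omega)]
    simp [padicValNat.eq_zero_of_not_dvd (by norm_num : ¬ (5 ∣ 3))]
  have e5 : 8 * i / 5 = i + 3 * i / 5 := by omega
  omega
end

section
/- Let p be a prime and let h be a power series over Z_p all of whose zeros (in the open unit disc of C_p) lie in pZ_p, with finitely many zeros. Let w' ∈ C_p with 0 < v_p(w') < ∞ such that v_p(w' − w'') = min(v_p(w'), v_p(w'')) for every w'' ∈ pZ_p. Set r = floor(v_p(w')). Then v_p(h(w')) = v_p(w') · #{zeros w'' of h with v_p(w'') ≥ r+1} + Σ_{v=1}^{r} v · #{zeros w'' of h with v_p(w'') = v}, where zeros are counted with multiplicity. -/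
/-!
By hypothesis each factor `w' - ι (a j)` has valuation `min α (v (ι (a j)))`, and since
`a j ∈ pℤ_p` the value `v (ι (a j))` is `⊤` or a positive integer. Such a minimum is `α` when
the value exceeds `⌊α⌋` and is the value itself otherwise; summing over `j` and grouping the
second kind of term by its value gives the formula.
-/

lemma PadicInt.one_le_valuation_of_dvd {p : ℕ} [Fact p.Prime] {b : ℤ_[p]} (hb : b ≠ 0)
    (hpb : (p : ℤ_[p]) ∣ b) : 1 ≤ b.valuation := by
  obtain ⟨c, rfl⟩ := hpb
  rw [PadicInt.valuation_mul (NeZero.ne _) (right_ne_zero_of_mul hb), PadicInt.valuation_p]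
  omega

lemma map_prod_of_map_mul {M N ι : Type*} [CommMonoid M] [AddCommMonoid N] (v : M → N)
    (hv1 : v 1 = 0) (hvmul : ∀ x y, v (x * y) = v x + v y) (s : Finset ι) (f : ι → M) :
    v (∏ j ∈ s, f j) = ∑ j ∈ s, v (f j) := by
  induction s using Finset.cons_induction with
  | empty => simpa using hv1
  | cons j s hj ih => rw [Finset.prod_cons, Finset.sum_cons, hvmul, ih]

lemma map_one_eq_zero_of_map_mul {M Γ : Type*} [MulOneClass M] [AddMonoid Γ] [IsLeftCancelAdd Γ]
    (v : M → WithTop Γ) (hvmul : ∀ x y, v (x * y) = v x + v y) {x : M} (hx : v x ≠ ⊤) :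
    v 1 = 0 :=
  WithTop.add_left_cancel hx (by rw [← hvmul, mul_one, add_zero])

lemma min_eq_indicator_sum (α : ℝ) {t : WithTop ℝ}
    (ht : t = ⊤ ∨ ∃ k : ℤ, 1 ≤ k ∧ t = ((k : ℝ) : WithTop ℝ)) :
    min (α : WithTop ℝ) t =
      ((α * (if (((⌊α⌋ + 1 : ℤ) : ℝ) : WithTop ℝ) ≤ t then 1 else 0)
        + ∑ m ∈ Finset.Icc (1 : ℤ) ⌊α⌋,
            (m : ℝ) * (if t = (((m : ℤ) : ℝ) : WithTop ℝ) then 1 else 0) : ℝ) : WithTop ℝ) := by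
  rcases ht with rfl | ⟨k, hk, rfl⟩
  · simp
  simp only [WithTop.coe_le_coe, WithTop.coe_inj, Int.cast_le, Int.cast_inj]
  by_cases hkα : ⌊α⌋ + 1 ≤ k
  · have hαk : α ≤ k := (Int.lt_floor_add_one α).le.trans (by exact_mod_cast hkα)
    have hnone : ∀ m ∈ Finset.Icc (1 : ℤ) ⌊α⌋, (m : ℝ) * (if k = m then 1 else 0) = 0 :=
      fun m hm => by rw [if_neg (by rw [Finset.mem_Icc] at hm; omega), mul_zero]
    rw [Finset.sum_eq_zero hnone, if_pos hkα, min_eq_left (by exact_mod_cast hαk)]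
    simp
  · have hkα' : (k : ℝ) ≤ α := (Int.cast_le.2 (by omega)).trans (Int.floor_le α)
    rw [if_neg hkα, min_eq_right (by exact_mod_cast hkα')]
    simp [Finset.sum_ite_eq, hk, show k ≤ ⌊α⌋ by omega]

lemma sum_min_eq_card_filter {ι : Type*} (α : ℝ) (s : Finset ι) (t : ι → WithTop ℝ)
    (ht : ∀ j ∈ s, t j = ⊤ ∨ ∃ k : ℤ, 1 ≤ k ∧ t j = ((k : ℝ) : WithTop ℝ)) :
    ∑ j ∈ s, min (α : WithTop ℝ) (t j) =
      ((α * ((s.filter (fun j => (((⌊α⌋ + 1 : ℤ) : ℝ) : WithTop ℝ) ≤ t j)).card : ℝ)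
        + ∑ m ∈ Finset.Icc (1 : ℤ) ⌊α⌋,
            (m : ℝ) * ((s.filter (fun j => t j = (((m : ℤ) : ℝ) : WithTop ℝ))).card : ℝ)
        : ℝ) : WithTop ℝ) := by
  rw [Finset.sum_congr rfl fun j hj => min_eq_indicator_sum α (ht j hj), ← WithTop.coe_sum,
    Finset.sum_add_distrib, ← Finset.mul_sum, Finset.sum_comm]
  simp only [← Finset.mul_sum, Finset.sum_boole]

lemma valuation_map_eq_top_or_one_le {p : ℕ} [Fact p.Prime] {K : Type*} [Field K]
    (v : K → WithTop ℝ) (hv0 : ∀ x, v x = ⊤ ↔ x = 0) (ι : ℤ_[p] →+* K)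
    (hι : ∀ b : ℤ_[p], b ≠ 0 → v (ι b) = ((b.valuation : ℝ) : WithTop ℝ))
    {b : ℤ_[p]} (hpb : (p : ℤ_[p]) ∣ b) :
    v (ι b) = ⊤ ∨ ∃ k : ℤ, 1 ≤ k ∧ v (ι b) = ((k : ℝ) : WithTop ℝ) := by
  rcases eq_or_ne b 0 with rfl | hb
  · exact .inl ((hv0 _).2 (map_zero ι))
  · exact .inr ⟨b.valuation, by exact_mod_cast PadicInt.one_le_valuation_of_dvd hb hpb,
      by rw [hι b hb]; norm_cast⟩

theorem stmt_16_general {p : ℕ} [Fact p.Prime] {K : Type} [Field K]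
    (v : K → WithTop ℝ)
    (hv0 : ∀ x, v x = ⊤ ↔ x = 0)
    (hvmul : ∀ x y, v (x * y) = v x + v y)
    (ι : ℤ_[p] →+* K)
    (hι : ∀ b : ℤ_[p], b ≠ 0 → v (ι b) = ((b.valuation : ℝ) : WithTop ℝ))
    (n : ℕ) (a : Fin n → ℤ_[p]) (ha : ∀ j, (p : ℤ_[p]) ∣ a j)
    (w' : K) (α : ℝ) (hw' : v w' = (α : WithTop ℝ))
    (hmin : ∀ b : ℤ_[p], (p : ℤ_[p]) ∣ b → v (w' - ι b) = min (v w') (v (ι b))) :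
    v (∏ j : Fin n, (w' - ι (a j))) =
      ((α * ((Finset.univ.filter
            (fun j : Fin n => ((((⌊α⌋ : ℤ) + 1 : ℤ) : ℝ) : WithTop ℝ) ≤ v (ι (a j)))).card : ℝ)
        + ∑ m ∈ Finset.Icc (1 : ℤ) ⌊α⌋,
            (m : ℝ) * ((Finset.univ.filter
              (fun j : Fin n => v (ι (a j)) = (((m : ℤ) : ℝ) : WithTop ℝ))).card : ℝ)
        : ℝ) : WithTop ℝ) := by
  have hv1 : v 1 = 0 := map_one_eq_zero_of_map_mul v hvmul (x := w') (by simp [hw'])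
  rw [map_prod_of_map_mul v hv1 hvmul, ← sum_min_eq_card_filter α _ (fun j => v (ι (a j)))
    fun j _ => valuation_map_eq_top_or_one_le v hv0 ι hι (ha j)]
  exact Finset.sum_congr rfl fun j _ => by rw [hmin _ (ha j), hw']

/-- Let `p` be prime and `K` a field (modelling `C_p`) with additive valuation
`v : K → WithTop ℝ` compatible via `ι` with the `p`-adic valuation on `ℤ_[p]`.  Let
`h(w) = Π_j (w - a_j)` with all zeros `a_j ∈ pℤ_p`.  Let `w' ∈ K` with `v(w') = α`,
`0 < α < ∞`, such that `v(w' - w'') = min(v(w'), v(w''))` for all `w'' ∈ pℤ_p`.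
With `r = ⌊α⌋`, then `v(h(w')) = α·#{j : v(a_j) ≥ r+1} + Σ_{m=1}^{r} m·#{j : v(a_j) = m}`,
zeros counted with multiplicity. -/
theorem stmt_16 {p : ℕ} [Fact p.Prime] {K : Type} [Field K]
    (v : K → WithTop ℝ)
    (hv0 : ∀ x, v x = ⊤ ↔ x = 0)
    (hvmul : ∀ x y, v (x * y) = v x + v y)
    (hvadd : ∀ x y, min (v x) (v y) ≤ v (x + y))
    (ι : ℤ_[p] →+* K)
    (hι : ∀ b : ℤ_[p], b ≠ 0 → v (ι b) = ((b.valuation : ℝ) : WithTop ℝ))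
    (n : ℕ) (a : Fin n → ℤ_[p]) (ha : ∀ j, (p : ℤ_[p]) ∣ a j)
    (w' : K) (α : ℝ) (hw' : v w' = (α : WithTop ℝ)) (hα : 0 < α)
    (hmin : ∀ b : ℤ_[p], (p : ℤ_[p]) ∣ b → v (w' - ι b) = min (v w') (v (ι b))) :
    v (∏ j : Fin n, (w' - ι (a j))) =
      ((α * ((Finset.univ.filter
            (fun j : Fin n => ((((⌊α⌋ : ℤ) + 1 : ℤ) : ℝ) : WithTop ℝ) ≤ v (ι (a j)))).card : ℝ)
        + ∑ m ∈ Finset.Icc (1 : ℤ) ⌊α⌋,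
            (m : ℝ) * ((Finset.univ.filter
              (fun j : Fin n => v (ι (a j)) = (((m : ℤ) : ℝ) : WithTop ℝ))).card : ℝ)
        : ℝ) : WithTop ℝ) :=
  stmt_16_general v hv0 hvmul ι hι n a ha w' α hw' hmin
end

section
/- Let k₀ ∈ Z, λ > 0, p an odd prime, δ = p−1, and let P(w) = Π_{j=0}^{λ−1}(w − w_{k₀ − jδ}) where w_k = (1+2p)^k − 1. If k ≡ k₀ mod δ and P(w_k) ≠ 0, then |v_p(P(w_k)) − pλ/(p−1)| ≤ A·(log λ + log|k−k₀| + 1) for some absolute constant A (i.e., v_p(P(w_k)) = pλ/(p−1) + O(log λ, log|k−k₀|)). -/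
/-!
Write `k - k₀ = (p - 1) t` and `u = 1 + 2p`. The `j`-th factor of `P(w_k)` is
`u ^ k - u ^ (k₀ - j (p - 1))`, of valuation `1 + v_p(t + j)` by lifting the exponent. As
`P(w_k) ≠ 0`, the integers `t, …, t + λ - 1` are nonzero, so up to sign they are
`m + 1, …, m + λ` with `m ≤ |t|`, and Legendre's formula gives
`(p - 1) ∑ v_p(m + 1 + j) = λ + s_p(m) - s_p(m + λ)`, where `s_p` is the base-`p` digit sum.
Since `s_p(n) ≤ (p - 1) (log_p n + 1)`, the deviation `v_p(P(w_k)) - pλ/(p - 1)` is at most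
`log_p (|t| + λ) + 1` in absolute value.
-/

open Finset

lemma natCast_zpow_ne_natCast_zpow {K : Type*} [Field K] [CharZero K] {a : ℕ} (ha : 1 < a)
    {k k' : ℤ} (hk : k ≠ k') : (a : K) ^ k ≠ (a : K) ^ k' := by
  rw [← Rat.cast_natCast, ← Rat.cast_zpow, ← Rat.cast_zpow, Ne, Rat.cast_inj]
  exact (zpow_right_injective₀ (by positivity) (by exact_mod_cast ha.ne')).ne hk

namespace Padic

variable {p : ℕ} [Fact p.Prime]

lemma valuation_neg (x : ℚ_[p]) : (-x).valuation = x.valuation := by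
  rcases eq_or_ne x 0 with rfl | hx
  · simp
  rw [neg_eq_neg_one_mul, valuation_mul (by norm_num) hx,
    show (-1 : ℚ_[p]) = ((-1 : ℤ) : ℚ_[p]) by norm_num, valuation_intCast]
  simp [padicValInt]

lemma valuation_prod {ι : Type*} (s : Finset ι) {f : ι → ℚ_[p]}
    (hf : ∀ i ∈ s, f i ≠ 0) :
    (∏ i ∈ s, f i).valuation = ∑ i ∈ s, (f i).valuation := by
  induction s using Finset.cons_induction with
  | empty => simp
  | cons a s ha ih =>
    rw [forall_mem_cons] at hf
    rw [prod_cons, sum_cons, valuation_mul hf.1 (prod_ne_zero_iff.mpr hf.2), ih hf.2]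

/-- Lifting the exponent, for integer exponents. -/
lemma valuation_zpow_sub_zpow (hp : Odd p) {a : ℕ} (ha : 1 < a) (hpa : p ∣ a - 1) {k k' : ℤ}
    (hk : k ≠ k') :
    ((a : ℚ_[p]) ^ k - (a : ℚ_[p]) ^ k').valuation =
      padicValNat p (a - 1) + padicValInt p (k - k') := by
  wlog hlt : k' < k generalizing k k'
  · rw [← neg_sub, valuation_neg, this hk.symm (hk.lt_or_gt.resolve_right hlt), padicValInt,
      padicValInt, ← Int.natAbs_neg, neg_sub]
  have ha0 : (a : ℚ_[p]) ≠ 0 := by exact_mod_cast (by omega : a ≠ 0)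
  have hpa' : ¬ p ∣ a := fun h ↦ (Fact.out : p.Prime).one_lt.ne'
    (Nat.dvd_one.mp (by simpa [Nat.sub_sub_self ha.le] using Nat.dvd_sub h hpa))
  obtain ⟨m, hm, rfl⟩ : ∃ m : ℕ, 0 < m ∧ k = k' + m :=
    ⟨(k - k').toNat, by omega, by omega⟩
  have hlt' : 1 < a ^ m := Nat.one_lt_pow hm.ne' ha
  have hsplit : (a : ℚ_[p]) ^ (k' + m) - (a : ℚ_[p]) ^ k' =
      (a : ℚ_[p]) ^ k' * ((a ^ m - 1 : ℕ) : ℚ_[p]) := by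
    rw [Nat.cast_sub hlt'.le, zpow_add₀ ha0, zpow_natCast]
    push_cast; ring
  rw [hsplit, valuation_mul (zpow_ne_zero _ ha0) (by exact_mod_cast (by omega : a ^ m - 1 ≠ 0)),
    valuation_zpow, valuation_natCast, valuation_natCast, padicValNat.eq_zero_of_not_dvd hpa',
    add_sub_cancel_left, padicValInt.of_nat]
  have := padicValNat.pow_sub_pow hp ha hpa (by simpa using hpa') hm.ne'
  simp_all

lemma valuation_one_add_two_mul_zpow_sub_zpow (hp : Odd p) {k k' : ℤ} (hk : k ≠ k') :
    (((1 + 2 * p : ℕ) : ℚ_[p]) ^ k - ((1 + 2 * p : ℕ) : ℚ_[p]) ^ k').valuation =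
      1 + padicValInt p (k - k') := by
  have hp3 : 3 ≤ p := (Nat.Prime.odd_iff Fact.out).mp hp
  have hp2 : ¬ p ∣ 2 := fun h ↦ by have := Nat.le_of_dvd two_pos h; omega
  rw [valuation_zpow_sub_zpow hp (by omega) ⟨2, by omega⟩ hk,
    show 1 + 2 * p - 1 = p * 2 by omega,
    padicValNat.mul (by omega) two_ne_zero, padicValNat_self, padicValNat.eq_zero_of_not_dvd hp2]
  push_cast
  ring

lemma valuation_prod_zpow_sub_zpow (hp : Odd p) {k k₀ t : ℤ}
    (ht : k - k₀ = ((p : ℤ) - 1) * t) (lam : ℕ) (hne : ∀ j < lam, t + j ≠ 0) :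
    (∏ j ∈ range lam, (((1 + 2 * p : ℕ) : ℚ_[p]) ^ k -
      ((1 + 2 * p : ℕ) : ℚ_[p]) ^ (k₀ - j * ((p : ℤ) - 1)))).valuation =
      lam + ∑ j ∈ range lam, (padicValInt p (t + j) : ℤ) := by
  have hp1 := (Fact.out : p.Prime).one_lt
  have hp_dvd : ¬ (p : ℤ) ∣ (p : ℤ) - 1 := fun h ↦ by
    have := Int.le_of_dvd (by omega) h
    omega
  have hexp (j : ℕ) : k - (k₀ - j * ((p : ℤ) - 1)) = ((p : ℤ) - 1) * (t + j) := by
    rw [mul_add, ← ht]; ring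
  have hk : ∀ j ∈ range lam, k ≠ k₀ - j * ((p : ℤ) - 1) := fun j hj ↦
    sub_ne_zero.mp (hexp j ▸ mul_ne_zero (by omega) (hne j (mem_range.mp hj)))
  rw [valuation_prod _ fun j hj ↦
      sub_ne_zero.mpr (natCast_zpow_ne_natCast_zpow (by omega) (hk j hj)),
    sum_congr rfl fun j hj ↦ valuation_one_add_two_mul_zpow_sub_zpow hp (hk j hj),
    sum_add_distrib, sum_const, card_range, nsmul_one]
  congr 1
  refine sum_congr rfl fun j hj ↦ ?_
  rw [hexp, padicValInt.mul (by omega) (hne j (mem_range.mp hj)),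
    padicValInt.eq_zero_of_not_dvd hp_dvd, zero_add]

end Padic

lemma Nat.digits_sum_le_mul_log_add_one {b : ℕ} (hb : 1 < b) (n : ℕ) :
    (b.digits n).sum ≤ (b - 1) * (Nat.log b n + 1) := by
  rcases eq_or_ne n 0 with rfl | hn
  · simp
  calc (b.digits n).sum ≤ (b.digits n).length • (b - 1) :=
        List.sum_le_card_nsmul _ _ fun d hd ↦ Nat.le_sub_one_of_lt (Nat.digits_lt_base hb hd)
    _ = (b - 1) * (Nat.log b n + 1) := by rw [Nat.length_digits b n hb hn, smul_eq_mul, mul_comm]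

section

variable {p : ℕ} [hp : Fact p.Prime]

lemma padicValNat_factorial_add (m l : ℕ) :
    padicValNat p (m + l).factorial =
      padicValNat p m.factorial + ∑ j ∈ range l, padicValNat p (m + 1 + j) := by
  induction l with
  | zero => simp
  | succ l ih =>
    rw [← add_assoc, Nat.factorial_succ, padicValNat.mul (by omega) (Nat.factorial_ne_zero _), ih,
      sum_range_succ]
    ring_nf

lemma sub_one_mul_padicValNat_factorial_int (n : ℕ) :
    ((p : ℤ) - 1) * padicValNat p n.factorial = n - (p.digits n).sum := by
  have h := congrArg (Nat.cast : ℕ → ℤ) (sub_one_mul_padicValNat_factorial (p := p) n)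
  rwa [Nat.cast_mul, Nat.cast_sub hp.out.one_le, Nat.cast_sub (Nat.digit_sum_le p n),
    Nat.cast_one] at h

lemma sub_one_mul_sum_padicValNat_add (m l : ℕ) :
    ((p : ℤ) - 1) * ∑ j ∈ range l, (padicValNat p (m + 1 + j) : ℤ) =
      l + (p.digits m).sum - (p.digits (m + l)).sum := by
  have h := congrArg (fun v : ℕ ↦ ((p : ℤ) - 1) * v) (padicValNat_factorial_add (p := p) m l)
  simp only [Nat.cast_add, Nat.cast_sum, mul_add, sub_one_mul_padicValNat_factorial_int] at h
  linarith

lemma abs_sub_one_mul_sum_padicValNat_add_sub_le (m l : ℕ) :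
    |((p : ℤ) - 1) * ∑ j ∈ range l, (padicValNat p (m + 1 + j) : ℤ) - l| ≤
      ((p : ℤ) - 1) * (Nat.log p (m + l) + 1) := by
  have hdigits : ∀ n ≤ m + l,
      ((p.digits n).sum : ℤ) ≤ ((p : ℤ) - 1) * (Nat.log p (m + l) + 1) := by
    intro n hn
    have h := (Nat.digits_sum_le_mul_log_add_one hp.out.one_lt n).trans
      (Nat.mul_le_mul_left (p - 1) (Nat.succ_le_succ (Nat.log_mono_right hn)))
    calc ((p.digits n).sum : ℤ) ≤ ((p - 1) * (Nat.log p (m + l) + 1) : ℕ) := by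
          exact_mod_cast h
      _ = ((p : ℤ) - 1) * (Nat.log p (m + l) + 1) := by push_cast [hp.out.one_le]; ring
  have h₁ := hdigits m (by omega)
  have h₂ := hdigits (m + l) le_rfl
  rw [sub_one_mul_sum_padicValNat_add, abs_le]
  constructor <;>
    linarith [Int.natCast_nonneg (p.digits m).sum, Int.natCast_nonneg (p.digits (m + l)).sum]

lemma exists_sum_natAbs_add_eq {M : Type*} [AddCommMonoid M] (f : ℕ → M) (t : ℤ) (l : ℕ)
    (ht : ∀ j < l, t + j ≠ 0) :
    ∃ m ≤ t.natAbs, ∑ j ∈ range l, f (t + j).natAbs = ∑ j ∈ range l, f (m + 1 + j) := by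
  rcases Nat.eq_zero_or_pos l with rfl | hl
  · exact ⟨0, Nat.zero_le _, by simp⟩
  rcases lt_or_ge t 0 with hneg | hnonneg
  · have hlast : t + (l - 1 : ℕ) < 0 := by
      by_contra! h
      exact ht (-t).toNat (by omega) (by omega)
    refine ⟨(-t - l).toNat, by omega, ?_⟩
    rw [← sum_range_reflect]
    refine sum_congr rfl fun j hj ↦ ?_
    rw [mem_range] at hj
    congr 1
    omega
  · have := ht 0 hl
    refine ⟨(t - 1).toNat, by omega, sum_congr rfl fun j _ ↦ ?_⟩
    congr 1
    omega

lemma abs_sub_one_mul_sum_padicValInt_add_sub_le (t : ℤ) (l : ℕ) (ht : ∀ j < l, t + j ≠ 0) :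
    |((p : ℤ) - 1) * ∑ j ∈ range l, (padicValInt p (t + j) : ℤ) - l| ≤
      ((p : ℤ) - 1) * (Nat.log p (t.natAbs + l) + 1) := by
  obtain ⟨m, hm, hsum⟩ := exists_sum_natAbs_add_eq (fun n ↦ (padicValNat p n : ℤ)) t l ht
  simp only [padicValInt]
  rw [hsum]
  refine (abs_sub_one_mul_sum_padicValNat_add_sub_le m l).trans ?_
  have := Nat.log_mono_right (b := p) (Nat.add_le_add_right hm l)
  have := hp.out.one_le
  gcongr
  linarith

end

lemma abs_add_sub_mul_div_sub_one_le {p S l L : ℝ} (hp : 1 < p)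
    (h : |(p - 1) * S - l| ≤ (p - 1) * L) : |l + S - p * l / (p - 1)| ≤ L := by
  have hp0 : 0 < p - 1 := by linarith
  rw [show l + S - p * l / (p - 1) = ((p - 1) * S - l) / (p - 1) by field_simp; ring,
    abs_div, abs_of_pos hp0, div_le_iff₀ hp0]
  linarith

lemma Real.natLog_le_log {b : ℕ} (hb : 3 ≤ b) (n : ℕ) :
    (Nat.log b n : ℝ) ≤ Real.log n := by
  have hlogb : 1 ≤ Real.log b := by
    rw [Real.le_log_iff_exp_le (by positivity)]
    have : (3 : ℝ) ≤ b := by exact_mod_cast hb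
    linarith [Real.exp_one_lt_d9]
  calc (Nat.log b n : ℝ) ≤ Real.logb b n := Real.natLog_le_logb n b
    _ ≤ Real.log n := div_le_self (Real.log_natCast_nonneg n) hlogb

lemma natLog_add_add_one_le {p : ℕ} (hp : 3 ≤ p) {t c : ℤ} (ht : t ≠ 0) (htc : |t| ≤ c)
    {l : ℕ} (hl : 0 < l) :
    (Nat.log p (t.natAbs + l) : ℝ) + 1 ≤ 2 * (Real.log l + Real.log c + 1) := by
  have hc : (1 : ℤ) ≤ c := htc.trans' (Int.one_le_abs ht)
  have hcR : (1 : ℝ) ≤ c := by exact_mod_cast hc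
  have hlR : (1 : ℝ) ≤ l := by exact_mod_cast hl
  have hN : ((t.natAbs + l : ℕ) : ℝ) ≤ 2 * c * l := by
    have : (t.natAbs : ℝ) ≤ c := by rw [Nat.cast_natAbs]; exact_mod_cast htc
    push_cast
    nlinarith
  calc (Nat.log p (t.natAbs + l) : ℝ) + 1 ≤ Real.log (t.natAbs + l : ℕ) + 1 := by
        gcongr; exact Real.natLog_le_log hp _
    _ ≤ Real.log (2 * c * l) + 1 := by gcongr
    _ = Real.log 2 + Real.log c + Real.log l + 1 := by
      rw [Real.log_mul (by positivity) (by positivity),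
        Real.log_mul (by positivity) (by positivity)]
    _ ≤ 2 * (Real.log l + Real.log c + 1) := by
      linarith [Real.log_two_lt_d9, Real.log_nonneg hcR, Real.log_nonneg hlR]

/-- Let `p` be an odd prime, `δ = p-1`, `w_m = (1+2p)^m - 1`, and
`P(w) = Π_{j=0}^{λ-1} (w - w_{k₀ - jδ})`.  If `k ≡ k₀ (mod δ)` and `P(w_k) ≠ 0`, then
`v_p(P(w_k)) = pλ/(p-1) + O(log λ, log|k - k₀|)`, i.e. there is an absolute constant
`A > 0` with `|v_p(P(w_k)) - pλ/(p-1)| ≤ A·(log λ + log|k - k₀| + 1)`. -/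
theorem stmt_18 :
    ∃ A : ℝ, 0 < A ∧
      ∀ (p : ℕ) [Fact p.Prime], Odd p →
        ∀ (k₀ k : ℤ) (lam : ℕ), 0 < lam →
          ((p : ℤ) - 1) ∣ (k - k₀) →
          ∀ P : ℚ_[p],
            P = ∏ j ∈ Finset.range lam,
                  (((1 + 2 * (p : ℚ_[p])) ^ k - 1)
                    - ((1 + 2 * (p : ℚ_[p])) ^ (k₀ - (j : ℤ) * ((p : ℤ) - 1)) - 1)) →
            P ≠ 0 →
            |(P.valuation : ℝ) - (p : ℝ) * (lam : ℝ) / ((p : ℝ) - 1)|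
              ≤ A * (Real.log (lam : ℝ) + Real.log ((|k - k₀| : ℤ) : ℝ) + 1) := by
  refine ⟨2, two_pos, fun p _ hp k₀ k lam hlam ⟨t, ht⟩ P hP hP0 ↦ ?_⟩
  have hp3 : 3 ≤ p := (Nat.Prime.odd_iff Fact.out).mp hp
  have hu : 1 + 2 * (p : ℚ_[p]) = ((1 + 2 * p : ℕ) : ℚ_[p]) := by push_cast; ring
  simp only [sub_sub_sub_cancel_right, hu] at hP
  subst hP
  have hne : ∀ j < lam, t + j ≠ 0 := fun j hj htj ↦ by
    refine prod_ne_zero_iff.mp hP0 j (mem_range.mpr hj) (sub_eq_zero.mpr ?_)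
    rw [show k = k₀ - j * ((p : ℤ) - 1) by linear_combination ht + ((p : ℤ) - 1) * htj]
  have hsum := abs_sub_one_mul_sum_padicValInt_add_sub_le (p := p) t lam hne
  have htk : |t| ≤ |k - k₀| := by
    rw [ht, abs_mul, abs_of_pos (a := (p : ℤ) - 1) (by omega)]
    nlinarith [abs_nonneg t]
  rw [Padic.valuation_prod_zpow_sub_zpow hp ht lam hne, Int.cast_add, Int.cast_natCast]
  refine (abs_add_sub_mul_div_sub_one_le (by exact_mod_cast (by omega : 1 < p)) ?_).trans
    (natLog_add_add_one_le hp3 (by simpa using hne 0 hlam) htk hlam)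
  exact_mod_cast hsum
end
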